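/- arXiv:2002.03882 — 2 statements merged into one kernel-verified Lean document; each statement's English description precedes it below -/
import Mathlib

section
/- Suppose (u_k, y_k), k = 0,…,N−1, is a trajectory of a minimal realization (A,B,C,D) of order n, u is persistently exciting of order L+n, and ν < L. If for every α ∈ ℝ^{N−L+1} with a zero data-prefix of length ν the inequality Σ_{k=0}^{L−1} ρ_kᵀ M ρ_k ≥ 0 holds, where ρ_k = Σ_{j=0}^{k} g_j ŵ_{k−j} and ŵ_i = Σ_{j=0}^{N−L} α_j (u_{i+j}; y_{i+j}), then (A,B,C,D) satisfies the (L−ν)-IQC given by (g, M). -/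
open Matrix Finset

/-- `(u, y)` is a trajectory of `(A, B, C, D)` over the horizon `N`. -/
def IsTrajectory {n m p : ℕ} (A : Matrix (Fin n) (Fin n) ℝ) (B : Matrix (Fin n) (Fin m) ℝ)
    (C : Matrix (Fin p) (Fin n) ℝ) (D : Matrix (Fin p) (Fin m) ℝ)
    (N : ℕ) (u : ℕ → Fin m → ℝ) (y : ℕ → Fin p → ℝ) : Prop :=
  ∃ x : ℕ → Fin n → ℝ, ∀ k < N,
    x (k + 1) = A.mulVec (x k) + B.mulVec (u k) ∧
    y k = C.mulVec (x k) + D.mulVec (u k)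

/-- `(u, y)` is a trajectory of `(A, B, C, D)` over the horizon `N` starting from `x₀ = 0`. -/
def IsZeroInitTrajectory {n m p : ℕ} (A : Matrix (Fin n) (Fin n) ℝ) (B : Matrix (Fin n) (Fin m) ℝ)
    (C : Matrix (Fin p) (Fin n) ℝ) (D : Matrix (Fin p) (Fin m) ℝ)
    (N : ℕ) (u : ℕ → Fin m → ℝ) (y : ℕ → Fin p → ℝ) : Prop :=
  ∃ x : ℕ → Fin n → ℝ, x 0 = 0 ∧ ∀ k < N,
    x (k + 1) = A.mulVec (x k) + B.mulVec (u k) ∧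
    y k = C.mulVec (x k) + D.mulVec (u k)

/-- The observability matrix `col(C, CA, …, CA^{n-1})`. -/
def obsMat {n p : ℕ} (A : Matrix (Fin n) (Fin n) ℝ) (C : Matrix (Fin p) (Fin n) ℝ) :
    Matrix (Fin n × Fin p) (Fin n) ℝ :=
  fun ip j => (C * A ^ (ip.1 : ℕ)) ip.2 j

/-- The controllability matrix `(B, AB, …, A^{n-1}B)`. -/
def ctrbMat {n m : ℕ} (A : Matrix (Fin n) (Fin n) ℝ) (B : Matrix (Fin n) (Fin m) ℝ) :
    Matrix (Fin n) (Fin n × Fin m) ℝ :=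
  fun i jm => (A ^ (jm.1 : ℕ) * B) i jm.2

/-- Minimality of a realization. -/
def IsMinimal {n m p : ℕ} (A : Matrix (Fin n) (Fin n) ℝ) (B : Matrix (Fin n) (Fin m) ℝ)
    (C : Matrix (Fin p) (Fin n) ℝ) : Prop :=
  (obsMat A C).rank = n ∧ (ctrbMat A B).rank = n

/-- The Hankel matrix of depth `L` of a signal of length `N`. -/
def hankelMat (q L N : ℕ) (u : ℕ → Fin q → ℝ) :
    Matrix (Fin L × Fin q) (Fin (N - L + 1)) ℝ :=
  fun is j => u ((is.1 : ℕ) + (j : ℕ)) is.2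

/-- Persistency of excitation of order `L` of a signal of length `N`. -/
def PersistentlyExciting (m L N : ℕ) (u : ℕ → Fin m → ℝ) : Prop :=
  (hankelMat m L N u).rank = m * L

/-- The linear combination `Σ_j α_j u_{i+j}` of time shifts of a signal. -/
def combSignal {q : ℕ} (N L : ℕ) (α : Fin (N - L + 1) → ℝ) (u : ℕ → Fin q → ℝ) (i : ℕ) :
    Fin q → ℝ :=
  fun s => ∑ j : Fin (N - L + 1), α j * u (i + (j : ℕ)) s

/-- `α` has a zero data-prefix of length `ν` with respect to the data `(u, y)`. -/
def ZeroDataPrefix {m p : ℕ} (N L ν : ℕ) (α : Fin (N - L + 1) → ℝ)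
    (u : ℕ → Fin m → ℝ) (y : ℕ → Fin p → ℝ) : Prop :=
  ∀ i < ν, combSignal N L α u i = 0 ∧ combSignal N L α y i = 0

/-- The filtered signal `r_k = Σ_{j=0}^{k} g_j w_{k-j}` with `w_k = (u_k; y_k)`. -/
def filteredSignal {m p nr : ℕ} (g : ℕ → Matrix (Fin nr) (Fin (m + p)) ℝ)
    (u : ℕ → Fin m → ℝ) (y : ℕ → Fin p → ℝ) (k : ℕ) : Fin nr → ℝ :=
  ∑ j ∈ Finset.range (k + 1), (g j).mulVec (Fin.append (u (k - j)) (y (k - j)))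

/-- The system `(A, B, C, D)` satisfies the `L`-IQC given by `(g, M)`. -/
def SatisfiesLIQC {n m p nr : ℕ} (A : Matrix (Fin n) (Fin n) ℝ) (B : Matrix (Fin n) (Fin m) ℝ)
    (C : Matrix (Fin p) (Fin n) ℝ) (D : Matrix (Fin p) (Fin m) ℝ) (L : ℕ)
    (g : ℕ → Matrix (Fin nr) (Fin (m + p)) ℝ) (M : Matrix (Fin nr) (Fin nr) ℝ) : Prop :=
  ∀ u : ℕ → Fin m → ℝ, ∀ y : ℕ → Fin p → ℝ, IsZeroInitTrajectory A B C D L u y →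
    ∀ h < L, 0 ≤ ∑ k ∈ Finset.range (h + 1),
      (filteredSignal g u y k) ⬝ᵥ M.mulVec (filteredSignal g u y k)

/-! ### Auxiliary lemmas -/

section Aux

open Matrix

lemma vecMulInj_of_rank {ι κ : Type*} [Fintype ι] [Fintype κ] (Mx : Matrix ι κ ℝ)
    (h : Mx.rank = Fintype.card ι) : ∀ v, Mx.vecMul v = 0 → v = 0 := by
  intro v hv
  have h1 : Mxᵀ.rank = Fintype.card ι := by rw [Matrix.rank_transpose]; exact h
  have h2 := LinearMap.finrank_range_add_finrank_ker (Mxᵀ.mulVecLin)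
  rw [Module.finrank_pi] at h2
  have hker : LinearMap.ker Mxᵀ.mulVecLin = ⊥ := by
    rw [← Submodule.finrank_eq_zero (R := ℝ)]
    have : Module.finrank ℝ ↥(LinearMap.range Mxᵀ.mulVecLin) = Fintype.card ι := h1
    omega
  have hv' : Mxᵀ.mulVecLin v = 0 := by
    simpa [Matrix.mulVecLin_apply, Matrix.mulVec_transpose] using hv
  have hm : v ∈ LinearMap.ker Mxᵀ.mulVecLin := LinearMap.mem_ker.2 hv'
  rw [hker] at hm
  simpa using hm

lemma mulVec_surj_of_vecMulInj {ι κ : Type*} [Fintype ι] [Fintype κ] (Mx : Matrix ι κ ℝ)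
    (h : ∀ v, Mx.vecMul v = 0 → v = 0) : Function.Surjective Mx.mulVec := by
  have hker : LinearMap.ker Mxᵀ.mulVecLin = ⊥ := by
    rw [LinearMap.ker_eq_bot']
    intro v hv
    exact h v (by simpa [Matrix.mulVecLin_apply, Matrix.mulVec_transpose] using hv)
  have h2 := LinearMap.finrank_range_add_finrank_ker (Mxᵀ.mulVecLin)
  rw [Module.finrank_pi, hker, finrank_bot] at h2
  have h1 : Mx.rank = Fintype.card ι := by
    rw [← Matrix.rank_transpose]; unfold Matrix.rank; omega
  have htop : LinearMap.range Mx.mulVecLin = ⊤ := by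
    apply Submodule.eq_top_of_finrank_eq
    rw [Module.finrank_pi]; exact h1
  intro w
  have hw : w ∈ LinearMap.range Mx.mulVecLin := htop ▸ Submodule.mem_top
  obtain ⟨a, ha⟩ := hw
  exact ⟨a, by simpa [Matrix.mulVecLin_apply] using ha⟩

lemma sum_dotProduct_aux {ι : Type*} {q : ℕ} (s : Finset ι) (f : ι → Fin q → ℝ) (v : Fin q → ℝ) :
    (∑ i ∈ s, f i) ⬝ᵥ v = ∑ i ∈ s, f i ⬝ᵥ v := by
  simp only [dotProduct, Finset.sum_apply, Finset.sum_mul]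
  exact Finset.sum_comm

lemma vecMul_sum_aux {ι : Type*} {a b : ℕ} (s : Finset ι) (ξ : Fin a → ℝ)
    (M : ι → Matrix (Fin a) (Fin b) ℝ) :
    ξ ᵥ* (∑ t ∈ s, M t) = ∑ t ∈ s, ξ ᵥ* M t := by
  funext j'
  simp only [Matrix.vecMul, dotProduct, Finset.sum_apply, Matrix.sum_apply,
    Finset.mul_sum]
  exact Finset.sum_comm

lemma vecMul_smul_aux {a b : ℕ} (c : ℝ) (ξ : Fin a → ℝ) (M : Matrix (Fin a) (Fin b) ℝ) :
    ξ ᵥ* (c • M) = c • (ξ ᵥ* M) := by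
  funext j'
  simp only [Matrix.vecMul, dotProduct, Matrix.smul_apply, smul_eq_mul, Pi.smul_apply]
  rw [Finset.mul_sum]
  exact Finset.sum_congr rfl fun i _ => by ring

lemma state_transition {n mm : ℕ} (A : Matrix (Fin n) (Fin n) ℝ) (B : Matrix (Fin n) (Fin mm) ℝ)
    {N : ℕ} {x : ℕ → Fin n → ℝ} {u : ℕ → Fin mm → ℝ}
    (hx : ∀ k < N, x (k+1) = A.mulVec (x k) + B.mulVec (u k)) :
    ∀ t j, j + t ≤ N → x (j + t) =
      (A^t).mulVec (x j) + ∑ i ∈ range t, ((A^(t-1-i) * B).mulVec (u (j+i))) := by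
  intro t
  induction t with
  | zero => intro j hj; simp [Matrix.one_mulVec]
  | succ t ih =>
    intro j hj
    rw [show j + (t+1) = (j+t)+1 by ring, hx _ (by omega), ih j (by omega)]
    rw [Finset.sum_range_succ]
    have hmap : A.mulVec (∑ i ∈ range t, ((A^(t-1-i) * B).mulVec (u (j+i)))) =
        ∑ i ∈ range t, (A * (A^(t-1-i) * B)).mulVec (u (j+i)) := by
      have h0 := map_sum (Matrix.mulVecLin A)
        (fun i => (A ^ (t - 1 - i) * B) *ᵥ u (j + i)) (range t)
      simp only [Matrix.mulVecLin_apply] at h0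
      rw [h0]
      exact Finset.sum_congr rfl fun i _ => by rw [Matrix.mulVec_mulVec]
    rw [Matrix.mulVec_add, hmap, Matrix.mulVec_mulVec]
    have h1 : A * A ^ t = A ^ (t+1) := (pow_succ' A t).symm
    have h2 : ∀ i ∈ range t, (A * (A^(t-1-i) * B)).mulVec (u (j+i)) =
        (A^(t+1-1-i) * B).mulVec (u (j+i)) := by
      intro i hi
      simp only [Finset.mem_range] at hi
      rw [← Matrix.mul_assoc, ← pow_succ']
      have : t - 1 - i + 1 = t + 1 - 1 - i := by omega
      rw [this]
    rw [Finset.sum_congr rfl h2, h1]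
    simp [Nat.add_sub_cancel]
    abel

end Aux
lemma dotProduct_sum_aux {ι : Type*} {q : ℕ} (s : Finset ι) (v : Fin q → ℝ)
    (f : ι → Fin q → ℝ) :
    v ⬝ᵥ (∑ i ∈ s, f i) = ∑ i ∈ s, v ⬝ᵥ f i := by
  simp only [dotProduct, Finset.sum_apply, Finset.mul_sum]
  exact Finset.sum_comm

lemma willems_core {n m L N : ℕ} (A : Matrix (Fin n) (Fin n) ℝ) (B : Matrix (Fin n) (Fin m) ℝ)
    (u : ℕ → Fin m → ℝ) (x : ℕ → Fin n → ℝ)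
    (hx : ∀ k < N, x (k+1) = A.mulVec (x k) + B.mulVec (u k))
    (hctrb : (ctrbMat A B).rank = n)
    (hpe : PersistentlyExciting m (L + n) N u)
    (hL : 1 ≤ L) (hLN : L + n ≤ N)
    (ξ : Fin n → ℝ) (η : ℕ → Fin m → ℝ) (hη : ∀ i, L ≤ i → η i = 0)
    (hF : ∀ j, j + L ≤ N → (ξ ⬝ᵥ x j) + ∑ i ∈ range L, η i ⬝ᵥ u (j + i) = 0) :
    ξ = 0 ∧ ∀ i, η i = 0 := by
  classical
  set c : ℕ → ℝ := fun t => (Matrix.charpoly A).coeff t with hcdef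
  have hdeg : (Matrix.charpoly A).natDegree = n := by
    rw [Matrix.charpoly_natDegree_eq_dim]; exact Fintype.card_fin n
  have hcn : c n = 1 := by
    have h1 := (Matrix.charpoly_monic A).coeff_natDegree
    rw [hdeg] at h1
    exact h1
  have hCH : ∑ t ∈ range (n+1), c t • A ^ t = 0 := by
    have h1 := Polynomial.aeval_eq_sum_range' (p := Matrix.charpoly A) (n := n+1)
      (by omega) A
    rw [Matrix.aeval_self_charpoly] at h1
    exact h1.symm
  set γ : ℕ → Fin m → ℝ := fun k => ∑ t ∈ range (n+1),
      c t • ((if k < t then ξ ᵥ* (A^(t-1-k) * B) else 0) +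
             (if t ≤ k then η (k-t) else 0)) with hγdef
  -- Step 1 : the eliminated equations
  have hstep1 : ∀ j, j + (L+n) ≤ N → ∑ k ∈ range (L+n), γ k ⬝ᵥ u (j+k) = 0 := by
    intro j hj
    have hswap : ∑ k ∈ range (L+n), γ k ⬝ᵥ u (j+k)
        = ∑ t ∈ range (n+1), c t * (∑ k ∈ range (L+n),
            ((if k < t then ξ ᵥ* (A^(t-1-k) * B) else 0) +
             (if t ≤ k then η (k-t) else 0)) ⬝ᵥ u (j+k)) := by
      calc ∑ k ∈ range (L+n), γ k ⬝ᵥ u (j+k)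
          = ∑ k ∈ range (L+n), ∑ t ∈ range (n+1),
              c t * (((if k < t then ξ ᵥ* (A^(t-1-k) * B) else 0) +
               (if t ≤ k then η (k-t) else 0)) ⬝ᵥ u (j+k)) := by
            refine Finset.sum_congr rfl fun k _ => ?_
            simp only [hγdef]
            rw [sum_dotProduct_aux]
            refine Finset.sum_congr rfl fun t _ => ?_
            rw [smul_dotProduct, smul_eq_mul]
        _ = ∑ t ∈ range (n+1), ∑ k ∈ range (L+n),
              c t * (((if k < t then ξ ᵥ* (A^(t-1-k) * B) else 0) +
               (if t ≤ k then η (k-t) else 0)) ⬝ᵥ u (j+k)) := Finset.sum_comm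
        _ = _ := by
            refine Finset.sum_congr rfl fun t _ => ?_
            rw [Finset.mul_sum]
    have hinner : ∀ t, t ≤ n → (∑ k ∈ range (L+n),
        ((if k < t then ξ ᵥ* (A^(t-1-k) * B) else 0) +
         (if t ≤ k then η (k-t) else 0)) ⬝ᵥ u (j+k))
        = - ((ξ ᵥ* A^t) ⬝ᵥ x j) := by
      intro t ht
      have hsplit : (∑ k ∈ range (L+n),
          ((if k < t then ξ ᵥ* (A^(t-1-k) * B) else 0) +
           (if t ≤ k then η (k-t) else 0)) ⬝ᵥ u (j+k))
          = (∑ k ∈ range (L+n), (if k < t then (ξ ᵥ* (A^(t-1-k) * B)) ⬝ᵥ u (j+k) else 0))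
          + (∑ k ∈ range (L+n), (if t ≤ k then η (k-t) ⬝ᵥ u (j+k) else 0)) := by
        rw [← Finset.sum_add_distrib]
        refine Finset.sum_congr rfl fun k _ => ?_
        rw [add_dotProduct]
        congr 1 <;> split <;> simp
      have hfirst : (∑ k ∈ range (L+n),
          (if k < t then (ξ ᵥ* (A^(t-1-k) * B)) ⬝ᵥ u (j+k) else 0))
          = ∑ k ∈ range t, (ξ ᵥ* (A^(t-1-k) * B)) ⬝ᵥ u (j+k) := by
        rw [← Finset.sum_subset (Finset.range_subset_range.2 (by omega : t ≤ L + n))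
          (fun k _ hk => by rw [if_neg (by simpa using hk)])]
        exact Finset.sum_congr rfl fun k hk => by rw [if_pos (Finset.mem_range.1 hk)]
      have hsecond : (∑ k ∈ range (L+n), (if t ≤ k then η (k-t) ⬝ᵥ u (j+k) else 0))
          = ∑ i ∈ range L, η i ⬝ᵥ u ((j+t)+i) := by
        have e1 : ∑ k ∈ range (L+n), (if t ≤ k then η (k-t) ⬝ᵥ u (j+k) else 0)
            = ∑ k ∈ Finset.Ico t (L+n), η (k-t) ⬝ᵥ u (j+k) := by
          rw [Finset.range_eq_Ico,
            ← Finset.sum_Ico_consecutive _ (Nat.zero_le t) (by omega : t ≤ L + n)]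
          have hz : ∑ k ∈ Finset.Ico 0 t, (if t ≤ k then η (k-t) ⬝ᵥ u (j+k) else 0) = 0 :=
            Finset.sum_eq_zero fun k hk => by
              rw [if_neg (by simp at hk; omega)]
          rw [hz, zero_add]
          exact Finset.sum_congr rfl fun k hk => by
            rw [if_pos (by simp at hk; omega)]
        rw [e1, Finset.sum_Ico_eq_sum_range]
        have e2 : ∀ i ∈ range (L + n - t), η (t + i - t) ⬝ᵥ u (j + (t + i))
            = η i ⬝ᵥ u ((j+t)+i) := by
          intro i _
          have : t + i - t = i := by omega
          rw [this, show j + (t+i) = (j+t)+i by ring]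
        rw [Finset.sum_congr rfl e2]
        rw [← Finset.sum_subset (Finset.range_subset_range.2 (by omega : L ≤ L + n - t))
          (fun i _ hi => by rw [hη i (by simpa using hi), zero_dotProduct])]
      have htr := state_transition A B hx t j (by omega)
      have hdot : ξ ⬝ᵥ x (j+t) = (ξ ᵥ* A^t) ⬝ᵥ x j
          + ∑ k ∈ range t, (ξ ᵥ* (A^(t-1-k) * B)) ⬝ᵥ u (j+k) := by
        rw [htr, dotProduct_add, Matrix.dotProduct_mulVec, dotProduct_sum_aux]
        congr 1
        exact Finset.sum_congr rfl fun k _ => Matrix.dotProduct_mulVec _ _ _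
      have hFt := hF (j+t) (by omega)
      rw [hsplit, hfirst, hsecond]
      linarith [hFt, hdot]
    rw [hswap]
    have hterm : ∀ t ∈ range (n+1), c t * (∑ k ∈ range (L+n),
        ((if k < t then ξ ᵥ* (A^(t-1-k) * B) else 0) +
         (if t ≤ k then η (k-t) else 0)) ⬝ᵥ u (j+k))
        = - ((ξ ᵥ* (c t • A^t)) ⬝ᵥ x j) := by
      intro t ht
      rw [hinner t (by simpa using Nat.lt_succ_iff.1 (Finset.mem_range.1 ht)),
        vecMul_smul_aux, smul_dotProduct, smul_eq_mul]
      ring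
    rw [Finset.sum_congr rfl hterm]
    have hsum0 : ∑ t ∈ range (n+1), (ξ ᵥ* (c t • A^t)) ⬝ᵥ x j = 0 := by
      rw [← sum_dotProduct_aux, ← vecMul_sum_aux, hCH, Matrix.vecMul_zero,
        zero_dotProduct]
    rw [Finset.sum_neg_distrib, hsum0, neg_zero]
  -- Step 2 : all γ coefficients vanish, by persistency of excitation
  have hγ0 : ∀ k, k < L + n → γ k = 0 := by
    have hrank := vecMulInj_of_rank (hankelMat m (L+n) N u) (by
      rw [hpe]; simp [Fintype.card_fin, mul_comm])
    set w : Fin (L+n) × Fin m → ℝ := fun ks => γ ks.1 ks.2 with hwdef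
    have hw : (hankelMat m (L+n) N u).vecMul w = 0 := by
      funext j
      have e : (hankelMat m (L+n) N u).vecMul w j
          = ∑ k ∈ range (L+n), γ k ⬝ᵥ u ((j:ℕ)+k) := by
        simp only [Matrix.vecMul, dotProduct, hankelMat]
        rw [Fintype.sum_prod_type, ← Fin.sum_univ_eq_sum_range]
        refine Finset.sum_congr rfl fun k _ => ?_
        refine Finset.sum_congr rfl fun s _ => ?_
        rw [add_comm (k:ℕ) (j:ℕ)]
      rw [e, hstep1 (j:ℕ) (by have := j.isLt; omega)]
      simp
    have hw0 := hrank w hw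
    intro k hk
    funext s
    exact congrFun hw0 (⟨k, hk⟩, s)
  -- Step 3 : η vanishes (downward induction)
  have hη0 : ∀ i, η i = 0 := by
    have key : ∀ d i, L ≤ i + d → η i = 0 := by
      intro d
      induction d with
      | zero => intro i hi; exact hη i (by omega)
      | succ d ih =>
        intro i hi
        by_cases hcase : L ≤ i + d
        · exact ih i hcase
        · have h1 : γ (n + i) = 0 := hγ0 (n+i) (by omega)
          have h2 : γ (n + i) = η i := by
            simp only [hγdef]
            rw [Finset.sum_range_succ]
            have hrest : ∀ t ∈ range n,
                c t • ((if n+i < t then ξ ᵥ* (A^(t-1-(n+i)) * B) else 0) +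
                       (if t ≤ n+i then η (n+i-t) else 0)) = 0 := by
              intro t ht
              simp only [Finset.mem_range] at ht
              rw [if_neg (by omega), if_pos (by omega),
                ih (n+i-t) (by omega)]
              simp
            rw [Finset.sum_eq_zero hrest, zero_add, if_neg (by omega),
              if_pos (by omega), hcn]
            have : n + i - n = i := by omega
            rw [this]
            simp
          rw [← h2]
          exact h1
    intro i
    exact key L i (by omega)
  -- Step 4 : ξ is orthogonal to the controllability matrix
  have hQ : ∀ i, i < n → ξ ᵥ* (A^i * B) = 0 := by
    intro i
    induction i using Nat.strong_induction_on with
    | _ i ihQ =>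
      intro hin
      have h1 : γ (n - 1 - i) = 0 := hγ0 _ (by omega)
      have h2 : γ (n - 1 - i) = ξ ᵥ* (A^i * B) + ∑ t ∈ range n,
          c t • (if n-1-i < t then ξ ᵥ* (A^(t-1-(n-1-i)) * B) else 0) := by
        simp only [hγdef, hη0]
        rw [Finset.sum_range_succ]
        have hlast : c n • ((if n-1-i < n then ξ ᵥ* (A^(n-1-(n-1-i)) * B) else 0) +
            (if n ≤ n-1-i then (0 : Fin m → ℝ) else 0)) = ξ ᵥ* (A^i * B) := by
          rw [if_pos (by omega), hcn]
          have : n - 1 - (n-1-i) = i := by omega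
          rw [this]
          simp
        rw [hlast, add_comm]
        congr 1
        refine Finset.sum_congr rfl fun t _ => ?_
        congr 1
        simp
      have h3 : ∀ t ∈ range n,
          c t • (if n-1-i < t then ξ ᵥ* (A^(t-1-(n-1-i)) * B) else 0) = 0 := by
        intro t ht
        simp only [Finset.mem_range] at ht
        by_cases hc2 : n-1-i < t
        · rw [if_pos hc2, ihQ (t-1-(n-1-i)) (by omega) (by omega)]; simp
        · rw [if_neg hc2]; simp
      rw [Finset.sum_eq_zero h3, add_zero] at h2
      rw [← h2]
      exact h1
  have hξ : ξ = 0 := by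
    apply vecMulInj_of_rank (ctrbMat A B) (by simpa using hctrb)
    funext js
    have h4 := congrFun (hQ (js.1 : ℕ) js.1.isLt) js.2
    simpa [ctrbMat, Matrix.vecMul, dotProduct] using h4
  exact ⟨hξ, hη0⟩

lemma sum_range_shift_aux (F : ℕ → ℝ) (a b : ℕ) :
    ∑ k ∈ range (a + b), F k = (∑ k ∈ range a, F k) + ∑ k ∈ range b, F (a + k) := by
  induction b with
  | zero => simp
  | succ b ih =>
    rw [show a + (b+1) = (a+b)+1 by ring, Finset.sum_range_succ, ih, Finset.sum_range_succ]
    ring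

lemma comb_mulVec_aux {a b K : ℕ} (M : Matrix (Fin a) (Fin b) ℝ) (α : Fin K → ℝ)
    (v : Fin K → Fin b → ℝ) :
    (fun e => ∑ j, α j * (M.mulVec (v j)) e) = M.mulVec (fun s' => ∑ j, α j * v j s') := by
  funext e
  simp only [Matrix.mulVec, dotProduct, Finset.mul_sum]
  rw [Finset.sum_comm]
  exact Finset.sum_congr rfl fun s _ => Finset.sum_congr rfl fun j' _ => by ring

lemma fin_append_zero {m p : ℕ} : Fin.append (0 : Fin m → ℝ) (0 : Fin p → ℝ) = 0 := by
  funext i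
  induction i using Fin.addCases with
  | left i => simp [Fin.append_left]
  | right i => simp [Fin.append_right]

lemma filteredSignal_congr {m p nr : ℕ} (g : ℕ → Matrix (Fin nr) (Fin (m + p)) ℝ)
    (u₁ u₂ : ℕ → Fin m → ℝ) (y₁ y₂ : ℕ → Fin p → ℝ) (k : ℕ)
    (hu : ∀ j ≤ k, u₁ j = u₂ j) (hy : ∀ j ≤ k, y₁ j = y₂ j) :
    filteredSignal g u₁ y₁ k = filteredSignal g u₂ y₂ k := by
  unfold filteredSignal
  refine Finset.sum_congr rfl fun j _ => ?_
  rw [hu _ (Nat.sub_le _ _), hy _ (Nat.sub_le _ _)]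

/-- data-based sufficiency for an `(L-ν)`-IQC. -/
theorem statement3 {n m p nr N L ν : ℕ} (A : Matrix (Fin n) (Fin n) ℝ)
    (B : Matrix (Fin n) (Fin m) ℝ) (C : Matrix (Fin p) (Fin n) ℝ) (D : Matrix (Fin p) (Fin m) ℝ)
    (u : ℕ → Fin m → ℝ) (y : ℕ → Fin p → ℝ)
    (g : ℕ → Matrix (Fin nr) (Fin (m + p)) ℝ) (M : Matrix (Fin nr) (Fin nr) ℝ)
    (hM : M.IsSymm)
    (hν : ν < L) (hLN : L + n ≤ N)
    (htraj : IsTrajectory A B C D N u y)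
    (hmin : IsMinimal A B C)
    (hpe : PersistentlyExciting m (L + n) N u)
    (hdata : ∀ α : Fin (N - L + 1) → ℝ, ZeroDataPrefix N L ν α u y →
      0 ≤ ∑ k ∈ Finset.range L,
        (filteredSignal g (combSignal N L α u) (combSignal N L α y) k) ⬝ᵥ
          M.mulVec (filteredSignal g (combSignal N L α u) (combSignal N L α y) k)) :
    SatisfiesLIQC A B C D (L - ν) g M := by
  classical
  obtain ⟨x, hx⟩ := htraj
  intro uu yy hzt h hh
  obtain ⟨xh, hx0, hxd⟩ := hzt
  have hL1 : 1 ≤ L := by omega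
  set s := L - 1 - h with hsdef
  have hsh : s + (h + 1) = L := by omega
  set ut : ℕ → Fin m → ℝ := fun k => if s ≤ k then uu (k - s) else 0 with hu'
  set yt : ℕ → Fin p → ℝ := fun k => if s ≤ k then yy (k - s) else 0 with hy'
  set xt : ℕ → Fin n → ℝ := fun k => if s ≤ k then xh (k - s) else 0 with hx'
  set Phi : Matrix ((Fin L × Fin m) ⊕ (Fin n)) (Fin (N - L + 1)) ℝ :=
    fun r j => Sum.elim (fun is : Fin L × Fin m => u ((is.1 : ℕ) + (j : ℕ)) is.2)
      (fun e => x (j : ℕ) e) r with hPhi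
  have hPhiinj : ∀ v, Phi.vecMul v = 0 → v = 0 := by
    intro v hv
    set xi : Fin n → ℝ := fun e => v (Sum.inr e) with hxidef
    set eta : ℕ → Fin m → ℝ :=
      fun i => if hi : i < L then (fun s' => v (Sum.inl (⟨i, hi⟩, s'))) else 0 with hetadef
    have hetaz : ∀ i, L ≤ i → eta i = 0 := by
      intro i hi; simp only [hetadef]; rw [dif_neg (by omega)]
    have hF : ∀ j, j + L ≤ N → (xi ⬝ᵥ x j) + ∑ i ∈ range L, eta i ⬝ᵥ u (j + i) = 0 := by
      intro j hj2
      have hcol := congrFun hv ⟨j, by omega⟩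
      simp only [hPhi, Matrix.vecMul, dotProduct, Pi.zero_apply] at hcol
      rw [Fintype.sum_sum_type] at hcol
      simp only [Sum.elim_inl, Sum.elim_inr] at hcol
      have e2 : xi ⬝ᵥ x j = ∑ e, v (Sum.inr e) * x j e := by
        simp only [hxidef, dotProduct]
      have e1 : ∑ i ∈ range L, eta i ⬝ᵥ u (j + i)
          = ∑ a : Fin L × Fin m, v (Sum.inl a) * u ((a.1 : ℕ) + j) a.2 := by
        rw [← Fin.sum_univ_eq_sum_range (fun i => eta i ⬝ᵥ u (j + i)) L,
          Fintype.sum_prod_type]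
        refine Finset.sum_congr rfl fun i _ => ?_
        simp only [hetadef]
        rw [dif_pos i.isLt]
        simp only [dotProduct, Fin.eta]
        exact Finset.sum_congr rfl fun s' _ => by rw [add_comm j (i:ℕ)]
      rw [e1, e2]
      rw [add_comm]
      exact hcol
    have hcore := willems_core A B u x (fun k hk => (hx k hk).1) hmin.2 hpe hL1 hLN xi eta hetaz hF
    funext r
    cases r with
    | inl a =>
      have h5 := congrFun (hcore.2 (a.1 : ℕ)) a.2
      simp only [hetadef] at h5
      rw [dif_pos a.1.isLt] at h5
      simpa using h5
    | inr e => exact congrFun hcore.1 e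
  obtain ⟨α, hα⟩ := mulVec_surj_of_vecMulInj Phi hPhiinj
    (Sum.elim (fun is : Fin L × Fin m => ut (is.1 : ℕ) is.2) 0)
  have hU : ∀ i, i < L → combSignal N L α u i = ut i := by
    intro i hiL
    funext s'
    have h6 := congrFun hα (Sum.inl (⟨i, hiL⟩, s'))
    simp only [hPhi, Matrix.mulVec, dotProduct, Sum.elim_inl] at h6
    simp only [combSignal]
    rw [← h6]
    exact Finset.sum_congr rfl fun j _ => by ring
  set X : ℕ → Fin n → ℝ := fun i e => ∑ j, α j * x (i + (j : ℕ)) e with hXdef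
  have hX0 : X 0 = 0 := by
    funext e
    have h7 := congrFun hα (Sum.inr e)
    simp only [hPhi, Matrix.mulVec, dotProduct, Sum.elim_inr, Pi.zero_apply] at h7
    simp only [hXdef, Pi.zero_apply]
    rw [← h7]
    refine Finset.sum_congr rfl fun j _ => ?_
    rw [Nat.zero_add]
    ring
  have hXdyn : ∀ i, i + 1 ≤ L →
      X (i+1) = A.mulVec (X i) + B.mulVec (combSignal N L α u i) := by
    intro i hiL
    funext e
    simp only [hXdef]
    have e3 : ∀ j : Fin (N - L + 1), x ((i+1) + (j : ℕ)) e
        = (A.mulVec (x (i + (j : ℕ)))) e + (B.mulVec (u (i + (j : ℕ)))) e := by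
      intro j
      rw [show (i+1) + (j : ℕ) = (i + (j : ℕ)) + 1 by ring,
        (hx _ (by have := j.isLt; omega)).1]
      rfl
    rw [Finset.sum_congr rfl fun j _ => by rw [e3 j]]
    rw [Finset.sum_congr rfl fun j _ => (mul_add (α j) _ _)]
    rw [Finset.sum_add_distrib, Pi.add_apply]
    congr 1
    · exact congrFun (comb_mulVec_aux A α (fun j => x (i + (j : ℕ)))) e
    · exact congrFun (comb_mulVec_aux B α (fun j => u (i + (j : ℕ)))) e
  have hYout : ∀ i, i < L →
      combSignal N L α y i = C.mulVec (X i) + D.mulVec (combSignal N L α u i) := by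
    intro i hiL
    funext e
    simp only [combSignal]
    have e3 : ∀ j : Fin (N - L + 1), y (i + (j : ℕ)) e
        = (C.mulVec (x (i + (j : ℕ)))) e + (D.mulVec (u (i + (j : ℕ)))) e := by
      intro j
      rw [(hx _ (by have := j.isLt; omega)).2]
      rfl
    rw [Finset.sum_congr rfl fun j _ => by rw [e3 j]]
    rw [Finset.sum_congr rfl fun j _ => (mul_add (α j) _ _)]
    rw [Finset.sum_add_distrib, Pi.add_apply]
    congr 1
    · exact congrFun (comb_mulVec_aux C α (fun j => x (i + (j : ℕ)))) e
    · exact congrFun (comb_mulVec_aux D α (fun j => u (i + (j : ℕ)))) e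
  have hXt : ∀ i, i < L → X i = xt i := by
    intro i
    induction i with
    | zero =>
      intro _
      rw [hX0]
      simp only [hx']
      by_cases h0 : s ≤ 0
      · rw [if_pos h0, show (0:ℕ) - s = 0 by omega, hx0]
      · rw [if_neg h0]
    | succ i ih =>
      intro hi1
      rw [hXdyn i (by omega), ih (by omega), hU i (by omega)]
      by_cases hc : s ≤ i
      · have e4 : xt i = xh (i - s) := by simp only [hx']; rw [if_pos hc]
        have e5 : ut i = uu (i - s) := by simp only [hu']; rw [if_pos hc]
        have e6 : xt (i+1) = xh ((i - s) + 1) := by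
          simp only [hx']; rw [if_pos (by omega), show i + 1 - s = (i - s) + 1 by omega]
        rw [e4, e5, e6, (hxd (i - s) (by omega)).1]
      · have e4 : xt i = 0 := by simp only [hx']; rw [if_neg hc]
        have e5 : ut i = 0 := by simp only [hu']; rw [if_neg hc]
        by_cases hc2 : s ≤ i + 1
        · have e6 : xt (i+1) = 0 := by
            simp only [hx']; rw [if_pos hc2, show i + 1 - s = 0 by omega, hx0]
          rw [e4, e5, e6]
          simp
        · have e6 : xt (i+1) = 0 := by simp only [hx']; rw [if_neg hc2]
          rw [e4, e5, e6]
          simp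
  have hY : ∀ i, i < L → combSignal N L α y i = yt i := by
    intro i hiL
    rw [hYout i hiL, hXt i hiL, hU i hiL]
    by_cases hc : s ≤ i
    · have e4 : xt i = xh (i - s) := by simp only [hx']; rw [if_pos hc]
      have e5 : ut i = uu (i - s) := by simp only [hu']; rw [if_pos hc]
      have e6 : yt i = yy (i - s) := by simp only [hy']; rw [if_pos hc]
      rw [e4, e5, e6]
      exact ((hxd (i - s) (by omega)).2).symm
    · have e4 : xt i = 0 := by simp only [hx']; rw [if_neg hc]
      have e5 : ut i = 0 := by simp only [hu']; rw [if_neg hc]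
      have e6 : yt i = 0 := by simp only [hy']; rw [if_neg hc]
      rw [e4, e5, e6]
      simp
  have hzp : ZeroDataPrefix N L ν α u y := by
    intro i hi
    constructor
    · rw [hU i (by omega)]; simp only [hu']; rw [if_neg (by omega)]
    · rw [hY i (by omega)]; simp only [hy']; rw [if_neg (by omega)]
  have hmain := hdata α hzp
  have hfs : ∀ k, k < L → filteredSignal g (combSignal N L α u) (combSignal N L α y) k
      = filteredSignal g ut yt k := by
    intro k hkL
    exact filteredSignal_congr g _ _ _ _ k (fun j hj => hU j (by omega))
      (fun j hj => hY j (by omega))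
  have hshift0 : ∀ k, k < s → filteredSignal g ut yt k = 0 := by
    intro k hks
    unfold filteredSignal
    refine Finset.sum_eq_zero fun j _ => ?_
    have e4 : ut (k - j) = 0 := by simp only [hu']; rw [if_neg (by omega)]
    have e5 : yt (k - j) = 0 := by simp only [hy']; rw [if_neg (by omega)]
    rw [e4, e5, fin_append_zero, Matrix.mulVec_zero]
  have hshift : ∀ k', filteredSignal g ut yt (s + k') = filteredSignal g uu yy k' := by
    intro k'
    unfold filteredSignal
    have hsub : range (k' + 1) ⊆ range (s + k' + 1) := Finset.range_subset_range.2 (by omega)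
    have hzero : ∀ j ∈ range (s + k' + 1), j ∉ range (k' + 1) →
        (g j).mulVec (Fin.append (ut (s + k' - j)) (yt (s + k' - j))) = 0 := by
      intro j hj1 hj2
      simp only [Finset.mem_range] at hj1 hj2
      have e4 : ut (s + k' - j) = 0 := by simp only [hu']; rw [if_neg (by omega)]
      have e5 : yt (s + k' - j) = 0 := by simp only [hy']; rw [if_neg (by omega)]
      rw [e4, e5, fin_append_zero, Matrix.mulVec_zero]
    have hss := Finset.sum_subset hsub hzero
    rw [← hss]
    refine Finset.sum_congr rfl fun j hj => ?_
    have hjk : j ≤ k' := by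
      have := Finset.mem_range.1 hj; omega
    have e4 : ut (s + k' - j) = uu (k' - j) := by
      simp only [hu']
      rw [if_pos (by omega : s ≤ s + k' - j), show s + k' - j - s = k' - j by omega]
    have e5 : yt (s + k' - j) = yy (k' - j) := by
      simp only [hy']
      rw [if_pos (by omega : s ≤ s + k' - j), show s + k' - j - s = k' - j by omega]
    rw [e4, e5]
  have heq : ∑ k ∈ range L,
      (filteredSignal g (combSignal N L α u) (combSignal N L α y) k) ⬝ᵥ
        M.mulVec (filteredSignal g (combSignal N L α u) (combSignal N L α y) k)
      = ∑ k ∈ range (h + 1),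
        (filteredSignal g uu yy k) ⬝ᵥ M.mulVec (filteredSignal g uu yy k) := by
    rw [Finset.sum_congr rfl (fun k hk => by
      rw [hfs k (Finset.mem_range.1 hk)])]
    rw [← hsh, sum_range_shift_aux]
    have hz : ∑ k ∈ range s,
        (filteredSignal g ut yt k) ⬝ᵥ M.mulVec (filteredSignal g ut yt k) = 0 := by
      refine Finset.sum_eq_zero fun k hk => ?_
      rw [hshift0 k (Finset.mem_range.1 hk)]
      simp
    rw [hz, zero_add]
    exact Finset.sum_congr rfl fun k _ => by rw [hshift k]
  rw [← heq]
  exact hmain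
end

section
/- Suppose (u_k, y_k), k = 0,…,N−1, is a trajectory of a minimal realization (A,B,C,D) of order n, u is persistently exciting of order L+n, and n ≤ ν < L. Fix γ² ∈ ℝ. Then the following are equivalent: (a) for every α ∈ ℝ^{N−L+1} with a zero data-prefix of length ν, γ² Σ_{i=0}^{L−1} |Σ_{j=0}^{N−L} α_j u_{i+j}|² ≥ Σ_{i=0}^{L−1} |Σ_{j=0}^{N−L} α_j y_{i+j}|²; (b) for every trajectory (u_k, y_k), k = 0,…,L−ν−1, of (A,B,C,D) with initial state x_0 = 0 and every h = 0,…,L−ν−1, γ² Σ_{k=0}^{h} |u_k|² ≥ Σ_{k=0}^{h} |y_k|². In other words, the finite-horizon ℓ₂-gain bound γ of the unknown system over horizon L−ν can be verified from one persistently exciting data trajectory. -/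
open Matrix Finset

/-!
Write `X`, `U`, `Y` for the combinations `∑ⱼ αⱼ x (i + j)`, `∑ⱼ αⱼ u (i + j)`, `∑ⱼ αⱼ y (i + j)`
of the length-`L` windows of the data; by linearity they form a trajectory of length `L`.
Controllability and persistency of excitation of order `L + n` make the rows of `[X₀; H_L(u)]`
linearly independent (Willems' fundamental lemma), so `X 0` and `U` on `[0, L)` can be prescribed.

(b) ⇒ (a): a zero data-prefix of length `ν ≥ n` forces `X 0 = 0` by observability, hence
`X ν = 0`, and the window after time `ν` is a zero-state trajectory of length `L - ν` carrying all
of the input and output energy.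
(a) ⇒ (b): a zero-state trajectory up to time `h`, preceded by `ν` zero inputs and followed by zero
inputs, is such a window with a zero data-prefix; summing its output over the whole window only
increases the output energy.
-/

namespace Matrix

variable {K : Type*} [Field K] {ρ κ : Type*} [Fintype ρ] [Fintype κ]

theorem eq_zero_of_vecMul_eq_zero_of_rank_eq {M : Matrix ρ κ K} (h : M.rank = Fintype.card ρ)
    {φ : ρ → K} (hφ : φ ᵥ* M = 0) : φ = 0 := by
  have hli : LinearIndependent K M.row := by
    rw [linearIndependent_iff_card_eq_finrank_span, ← h, rank_eq_finrank_span_row]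
    rfl
  exact vecMul_injective_iff.mpr hli (hφ.trans (zero_vecMul M).symm)

theorem eq_zero_of_mulVec_eq_zero_of_rank_eq {M : Matrix ρ κ K} (h : M.rank = Fintype.card κ)
    {v : κ → K} (hv : M *ᵥ v = 0) : v = 0 :=
  eq_zero_of_vecMul_eq_zero_of_rank_eq (M := Mᵀ) (by rwa [rank_transpose])
    (by rwa [vecMul_transpose])

theorem mulVec_surjective_of_vecMul_eq_zero [DecidableEq κ] {M : Matrix ρ κ K}
    (h : ∀ φ : ρ → K, φ ᵥ* M = 0 → φ = 0) : Function.Surjective M.mulVec := by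
  have hli : LinearIndependent K M.row := by
    rw [← vecMul_injective_iff, ← coe_vecMulLinear, injective_iff_map_eq_zero']
    exact fun φ => ⟨h φ, fun hφ => hφ ▸ zero_vecMul M⟩
  have htop : LinearMap.range M.mulVecLin = ⊤ :=
    Submodule.eq_top_of_finrank_eq (by rw [Module.finrank_pi, ← hli.rank_matrix]; rfl)
  exact fun w => by simpa using LinearMap.range_eq_top.mp htop w

end Matrix

theorem eq_zero_of_reverse_recurrence {R V : Type*} [Semiring R] [AddCommMonoid V] [Module R V]
    {g : ℕ → V} {c : ℕ → R} {n K : ℕ} (hc : c n = 1) (hg : ∀ s, K ≤ s → g s = 0)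
    (hrec : ∀ s < K, ∑ k ∈ range (n + 1), c k • g (s + n - k) = 0) (s : ℕ) : g s = 0 := by
  induction s using Nat.strong_decreasing_induction with
  | base => exact ⟨K, fun s hs => hg s hs.le⟩
  | step s ih =>
    by_cases hs : K ≤ s
    · exact hg s hs
    have h := hrec s (by omega)
    rwa [sum_range_succ, sum_eq_zero fun k hk => by rw [ih _ (by simp at hk; omega), smul_zero],
      hc, one_smul, zero_add, Nat.add_sub_cancel] at h

theorem sum_charpoly_coeff_smul_vecMul_pow {n : ℕ} {R : Type*} [CommRing R] [Nontrivial R]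
    (A : Matrix (Fin n) (Fin n) R) (η : Fin n → R) :
    ∑ k ∈ range (n + 1), A.charpoly.coeff k • (η ᵥ* A ^ k) = 0 := by
  have h := congrArg (η ᵥ* ·) (aeval_self_charpoly A)
  simp only [Polynomial.aeval_eq_sum_range, charpoly_natDegree_eq_dim, Fintype.card_fin,
    vecMul_sum, vecMul_smul, vecMul_zero] at h
  exact h

theorem charpoly_coeff_dim {n : ℕ} {R : Type*} [CommRing R] [Nontrivial R]
    (A : Matrix (Fin n) (Fin n) R) : A.charpoly.coeff n = 1 := by
  simpa using (charpoly_monic A).coeff_natDegree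

section StateSpace

variable {n m p : ℕ} {A : Matrix (Fin n) (Fin n) ℝ} {B : Matrix (Fin n) (Fin m) ℝ}
  {C : Matrix (Fin p) (Fin n) ℝ} {D : Matrix (Fin p) (Fin m) ℝ}

def IsStateTrajectory (A : Matrix (Fin n) (Fin n) ℝ) (B : Matrix (Fin n) (Fin m) ℝ)
    (C : Matrix (Fin p) (Fin n) ℝ) (D : Matrix (Fin p) (Fin m) ℝ)
    (T : ℕ) (x : ℕ → Fin n → ℝ) (u : ℕ → Fin m → ℝ) (y : ℕ → Fin p → ℝ) : Prop :=
  ∀ k < T, x (k + 1) = A *ᵥ x k + B *ᵥ u k ∧ y k = C *ᵥ x k + D *ᵥ u k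

namespace IsStateTrajectory

variable {T : ℕ} {x x' : ℕ → Fin n → ℝ} {u u' : ℕ → Fin m → ℝ} {y y' : ℕ → Fin p → ℝ}

theorem zero : IsStateTrajectory A B C D T 0 0 0 := fun _ _ => by simp

theorem mono (h : IsStateTrajectory A B C D T x u y) {T' : ℕ} (hT : T' ≤ T) :
    IsStateTrajectory A B C D T' x u y :=
  fun k hk => h k (by omega)

theorem shift (h : IsStateTrajectory A B C D T x u y) (ν : ℕ) :
    IsStateTrajectory A B C D (T - ν) (fun k => x (ν + k)) (fun k => u (ν + k))
      (fun k => y (ν + k)) :=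
  fun k hk => h (ν + k) (by omega)

theorem isZeroInitTrajectory (h : IsStateTrajectory A B C D T x u y) (h0 : x 0 = 0) :
    IsZeroInitTrajectory A B C D T u y :=
  ⟨x, h0, h⟩

theorem eq_of_input_eq (h : IsStateTrajectory A B C D T x u y)
    (h' : IsStateTrajectory A B C D T x' u' y') (h0 : x 0 = x' 0) (hu : ∀ k < T, u k = u' k) :
    (∀ k ≤ T, x k = x' k) ∧ ∀ k < T, y k = y' k := by
  have hx : ∀ k ≤ T, x k = x' k := by
    intro k hk
    induction k with
    | zero => exact h0
    | succ k ih => rw [(h k hk).1, (h' k hk).1, ih (by omega), hu k hk]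
  exact ⟨hx, fun k hk => by rw [(h k hk).2, (h' k hk).2, hx k hk.le, hu k hk]⟩

theorem eq_zero_of_input_eq_zero (h : IsStateTrajectory A B C D T x u y) (h0 : x 0 = 0)
    (hu : ∀ k < T, u k = 0) : (∀ k ≤ T, x k = 0) ∧ ∀ k < T, y k = 0 :=
  h.eq_of_input_eq zero h0 hu

theorem initial_eq_zero_of_observable (hobs : (obsMat A C).rank = n)
    (h : IsStateTrajectory A B C D n x u y) (hu : ∀ k < n, u k = 0) (hy : ∀ k < n, y k = 0) :
    x 0 = 0 := by
  have hpow : ∀ k ≤ n, x k = (A ^ k) *ᵥ x 0 := by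
    intro k hk
    induction k with
    | zero => simp
    | succ k ih =>
      rw [(h k hk).1, hu k hk, mulVec_zero, add_zero, ih (by omega), mulVec_mulVec, pow_succ']
  refine eq_zero_of_mulVec_eq_zero_of_rank_eq (by simpa using hobs) (funext fun ip => ?_)
  have hCx := (h ip.1 ip.1.isLt).2
  rw [hy ip.1 ip.1.isLt, hu ip.1 ip.1.isLt, mulVec_zero, add_zero,
    hpow ip.1 ip.1.isLt.le, mulVec_mulVec] at hCx
  exact (congrFun hCx ip.2).symm

end IsStateTrajectory

end StateSpace

section Combination

variable {N L : ℕ} (α : Fin (N - L + 1) → ℝ)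

theorem combSignal_congr {q : ℕ} {v w : ℕ → Fin q → ℝ} {i : ℕ}
    (h : ∀ j ≤ N - L, v (i + j) = w (i + j)) : combSignal N L α v i = combSignal N L α w i := by
  funext s
  exact sum_congr rfl fun j _ => by rw [h j (by omega)]

theorem combSignal_mulVec_add_mulVec {q r r' : ℕ} (M : Matrix (Fin q) (Fin r) ℝ)
    (M' : Matrix (Fin q) (Fin r') ℝ) (v : ℕ → Fin r → ℝ) (w : ℕ → Fin r' → ℝ) (i : ℕ) :
    combSignal N L α (fun k => M *ᵥ v k + M' *ᵥ w k) i =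
      M *ᵥ combSignal N L α v i + M' *ᵥ combSignal N L α w i := by
  funext s
  simp only [combSignal, Pi.add_apply, mulVec, dotProduct, mul_add, sum_add_distrib, mul_sum]
  congr 1 <;> exact sum_comm.trans (sum_congr rfl fun _ _ => sum_congr rfl fun _ _ => by ring)

theorem hankelMat_mulVec {q : ℕ} (u : ℕ → Fin q → ℝ) :
    hankelMat q L N u *ᵥ α = fun is => combSignal N L α u is.1 is.2 := by
  funext is
  simp only [hankelMat, combSignal, mulVec, dotProduct]
  exact sum_congr rfl fun j _ => mul_comm _ _

variable {n m p : ℕ} {A : Matrix (Fin n) (Fin n) ℝ} {B : Matrix (Fin n) (Fin m) ℝ}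
  {C : Matrix (Fin p) (Fin n) ℝ} {D : Matrix (Fin p) (Fin m) ℝ}
  {x : ℕ → Fin n → ℝ} {u : ℕ → Fin m → ℝ} {y : ℕ → Fin p → ℝ}

theorem isStateTrajectory_combSignal (h : IsStateTrajectory A B C D N x u y) (hLN : L ≤ N) :
    IsStateTrajectory A B C D L (combSignal N L α x) (combSignal N L α u)
      (combSignal N L α y) := by
  intro i hi
  constructor
  · calc combSignal N L α x (i + 1) = combSignal N L α (fun k => x (k + 1)) i := by
          funext s
          exact sum_congr rfl fun j _ => by rw [Nat.add_right_comm]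
      _ = _ := by
          rw [← combSignal_mulVec_add_mulVec]
          exact combSignal_congr α fun j hj => (h (i + j) (by omega)).1
  · rw [← combSignal_mulVec_add_mulVec]
    exact combSignal_congr α fun j hj => (h (i + j) (by omega)).2

end Combination

section FundamentalLemma

variable {n m N L : ℕ} {A : Matrix (Fin n) (Fin n) ℝ} {B : Matrix (Fin n) (Fin m) ℝ}
  {x : ℕ → Fin n → ℝ} {u : ℕ → Fin m → ℝ}

theorem vecMul_hankelMat {q K : ℕ} (u : ℕ → Fin q → ℝ) (ζ : ℕ → Fin q → ℝ) :
    (fun is : Fin K × Fin q => ζ is.1 is.2) ᵥ* hankelMat q K N u =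
      fun j : Fin (N - K + 1) => ∑ s ∈ range K, ζ s ⬝ᵥ u (j + s) := by
  funext j
  simp only [vecMul, dotProduct, hankelMat, Fintype.sum_prod_type]
  rw [← Fin.sum_univ_eq_sum_range]
  simp only [add_comm (j : ℕ)]

theorem PersistentlyExciting.eq_zero {K : ℕ} (hpe : PersistentlyExciting m K N u)
    {ζ : ℕ → Fin m → ℝ} (h : ∀ j ≤ N - K, ∑ s ∈ range K, ζ s ⬝ᵥ u (j + s) = 0) :
    ∀ s < K, ζ s = 0 := by
  have hφ := eq_zero_of_vecMul_eq_zero_of_rank_eq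
    (by rw [hpe, Fintype.card_prod, Fintype.card_fin, Fintype.card_fin, mul_comm])
    ((vecMul_hankelMat u ζ).trans (funext fun j => h j (by omega)))
  exact fun s hs => funext fun a => congrFun hφ (⟨s, hs⟩, a)

variable (A B) in
/-- Pulling the functional `(η, ζ)` on (state, input window) back `k` time steps along
`x (t + 1) = A *ᵥ x t + B *ᵥ u t` gives the functional `(η ᵥ* A ^ k, shiftedInput A B η ζ k)`. -/
def shiftedInput (η : Fin n → ℝ) (ζ : ℕ → Fin m → ℝ) (k : ℕ) : ℕ → Fin m → ℝ :=
  fun s => if s < k then η ᵥ* (A ^ (k - 1 - s) * B) else ζ (s - k)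

theorem shiftedInput_eq_of_le {η : Fin n → ℝ} {ζ : ℕ → Fin m → ℝ} {k K : ℕ} (hk : k ≤ K)
    (s : ℕ) : shiftedInput A B η ζ k s = shiftedInput A B η ζ K (s + K - k) := by
  unfold shiftedInput
  split_ifs with h₁ h₂ h₂
  · congr 3; omega
  · omega
  · omega
  · congr 1; omega

theorem dotProduct_add_sum_shiftedInput {T : ℕ}
    (hx : ∀ t < T, x (t + 1) = A *ᵥ x t + B *ᵥ u t) (η : Fin n → ℝ) (ζ : ℕ → Fin m → ℝ)
    {j k R : ℕ} (hjk : j + k ≤ T) (hkR : k ≤ R) :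
    (η ᵥ* A ^ k) ⬝ᵥ x j + ∑ s ∈ range R, shiftedInput A B η ζ k s ⬝ᵥ u (j + s) =
      η ⬝ᵥ x (j + k) + ∑ s ∈ range (R - k), ζ s ⬝ᵥ u (j + k + s) := by
  induction k generalizing j R with
  | zero => simp [shiftedInput]
  | succ k ih =>
    obtain ⟨R, rfl⟩ : ∃ R', R = R' + 1 := ⟨R - 1, by omega⟩
    have hhead : shiftedInput A B η ζ (k + 1) 0 = η ᵥ* (A ^ k * B) := by simp [shiftedInput]
    have htail : ∀ s, shiftedInput A B η ζ (k + 1) (s + 1) = shiftedInput A B η ζ k s := by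
      intro s
      simp only [shiftedInput, Nat.add_sub_add_right]
      split_ifs with h₁ h₂ h₂
      · congr 3; omega
      · omega
      · omega
      · rfl
    rw [sum_range_succ', hhead, add_zero]
    simp only [htail, ← add_assoc, add_right_comm j _ 1]
    rw [Nat.add_sub_add_right, ← ih (j := j + 1) (by omega) (by omega), hx j (by omega),
      dotProduct_add, dotProduct_mulVec, dotProduct_mulVec, vecMul_vecMul,
      vecMul_vecMul, pow_succ]
    ring

theorem sum_charpoly_coeff_smul_shiftedInput_eq_zero
    (hx : ∀ t < N, x (t + 1) = A *ᵥ x t + B *ᵥ u t) (hpe : PersistentlyExciting m (L + n) N u)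
    (hLN : L + n ≤ N) {η : Fin n → ℝ} {ζ : ℕ → Fin m → ℝ} (hζ : ∀ s, L ≤ s → ζ s = 0)
    (h : ∀ j ≤ N - L, η ⬝ᵥ x j + ∑ s ∈ range L, ζ s ⬝ᵥ u (j + s) = 0) :
    ∀ s < L + n, ∑ k ∈ range (n + 1), A.charpoly.coeff k • shiftedInput A B η ζ k s = 0 := by
  set θ := shiftedInput A B η ζ
  have hθ : ∀ k ≤ n, ∀ j ≤ N - (L + n),
      (η ᵥ* A ^ k) ⬝ᵥ x j + ∑ s ∈ range (L + n), θ k s ⬝ᵥ u (j + s) = 0 := by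
    intro k hk j hj
    rw [dotProduct_add_sum_shiftedInput hx η ζ (by omega) (by omega), ← h (j + k) (by omega)]
    congr 1
    exact (sum_subset (range_subset_range.2 (by omega)) fun s _ hs => by
      rw [hζ s (by simpa using hs), zero_dotProduct]).symm
  -- Cayley–Hamilton removes the state part of the combination; excitation kills its input part.
  refine hpe.eq_zero fun j hj => ?_
  calc ∑ s ∈ range (L + n), (∑ k ∈ range (n + 1), A.charpoly.coeff k • θ k s) ⬝ᵥ u (j + s)
      = ∑ k ∈ range (n + 1), A.charpoly.coeff k * ((η ᵥ* A ^ k) ⬝ᵥ x j +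
          ∑ s ∈ range (L + n), θ k s ⬝ᵥ u (j + s)) -
        (∑ k ∈ range (n + 1), A.charpoly.coeff k • (η ᵥ* A ^ k)) ⬝ᵥ x j := by
        simp only [sum_dotProduct, smul_dotProduct, smul_eq_mul, mul_add, sum_add_distrib,
          mul_sum, add_sub_cancel_left]
        exact sum_comm
    _ = 0 := by
        rw [sum_eq_zero fun k hk => by rw [hθ k (by simpa [Nat.lt_succ_iff] using hk) j hj,
          mul_zero], sum_charpoly_coeff_smul_vecMul_pow, zero_dotProduct, sub_zero]

theorem eq_zero_of_dotProduct_window_eq_zero (hx : ∀ t < N, x (t + 1) = A *ᵥ x t + B *ᵥ u t)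
    (hctrb : (ctrbMat A B).rank = n) (hpe : PersistentlyExciting m (L + n) N u)
    (hLN : L + n ≤ N) {η : Fin n → ℝ} {ζ : ℕ → Fin m → ℝ} (hζ : ∀ s, L ≤ s → ζ s = 0)
    (h : ∀ j ≤ N - L, η ⬝ᵥ x j + ∑ s ∈ range L, ζ s ⬝ᵥ u (j + s) = 0) :
    η = 0 ∧ ∀ s, ζ s = 0 := by
  set θ := shiftedInput A B η ζ
  have hψ := sum_charpoly_coeff_smul_shiftedInput_eq_zero hx hpe hLN hζ h
  -- `θ n` lists `η A^(n-1) B, …, η B, ζ 0, ζ 1, …`; `hψ` is a monic recurrence for it.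
  have hg : ∀ s, θ n s = 0 := by
    refine eq_zero_of_reverse_recurrence (charpoly_coeff_dim A) (K := L + n) (fun s hs => ?_)
      fun s hs => ?_
    · simp only [θ, shiftedInput, if_neg (by omega : ¬s < n)]
      exact hζ _ (by omega)
    · rw [← hψ s hs]
      refine sum_congr rfl fun k hk => congrArg _ ?_
      exact (shiftedInput_eq_of_le (by simpa [Nat.lt_succ_iff] using hk) s).symm
  constructor
  · refine eq_zero_of_vecMul_eq_zero_of_rank_eq (by simpa using hctrb) (funext fun ea => ?_)
    have := congrFun (hg (n - 1 - ea.1)) ea.2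
    simp only [θ, shiftedInput, if_pos (by omega : n - 1 - ea.1 < n),
      show n - 1 - (n - 1 - ea.1) = ea.1 by omega] at this
    exact this
  · intro s
    simpa [θ, shiftedInput] using hg (s + n)

theorem exists_combSignal_eq (hx : ∀ t < N, x (t + 1) = A *ᵥ x t + B *ᵥ u t)
    (hctrb : (ctrbMat A B).rank = n)
    (hpe : PersistentlyExciting m (L + n) N u) (hLN : L + n ≤ N)
    (v : Fin n → ℝ) (w : ℕ → Fin m → ℝ) :
    ∃ α : Fin (N - L + 1) → ℝ, combSignal N L α x 0 = v ∧ ∀ i < L, combSignal N L α u i = w i := by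
  let X : Matrix (Fin n) (Fin (N - L + 1)) ℝ := of fun r j => x j r
  have hX : ∀ α, X *ᵥ α = combSignal N L α x 0 := fun α => by
    funext r
    simp only [X, combSignal, mulVec, dotProduct, of_apply, zero_add, mul_comm]
  have hrows : ∀ φ, φ ᵥ* fromRows X (hankelMat m L N u) = 0 → φ = 0 := by
    intro φ hφ
    let ζ : ℕ → Fin m → ℝ := fun s a => if h : s < L then φ (.inr (⟨s, h⟩, a)) else 0
    have hφζ : φ ∘ Sum.inr = fun is => ζ is.1 is.2 := by
      funext is
      simp [ζ]
    rw [vecMul_fromRows, hφζ, vecMul_hankelMat] at hφ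
    obtain ⟨hη, hζ⟩ := eq_zero_of_dotProduct_window_eq_zero hx hctrb hpe hLN (ζ := ζ)
      (fun s hs => by simp [ζ, not_lt.2 hs]; rfl) fun j hj => by
        simpa [X, vecMul, dotProduct, mul_comm] using congrFun hφ ⟨j, by omega⟩
    funext r
    rcases r with r | ⟨i, a⟩
    · exact congrFun hη r
    · simpa [ζ] using congrFun (hζ i) a
  obtain ⟨α, hα⟩ := mulVec_surjective_of_vecMul_eq_zero hrows
    (Sum.elim v fun is => w is.1 is.2)
  rw [fromRows_mulVec, hankelMat_mulVec, hX] at hα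
  exact ⟨α, funext fun r => congrFun hα (.inl r),
    fun i hi => funext fun a => congrFun hα (.inr (⟨i, hi⟩, a))⟩

end FundamentalLemma

theorem sum_range_eq_sum_window_of_eq_zero {M : Type*} [AddCommMonoid M] {f : ℕ → M}
    {L ν h : ℕ} (hL : ν + h ≤ L) (hf : ∀ i < L, i < ν ∨ ν + h ≤ i → f i = 0) :
    ∑ i ∈ range L, f i = ∑ k ∈ range h, f (ν + k) := by
  rw [← sum_subset (s₁ := Ico ν (ν + h)) (fun i hi => by simp at hi ⊢; omega)
    fun i hi hi' => hf i (by simpa using hi) (by simp at hi'; omega),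
    sum_Ico_eq_sum_range, Nat.add_sub_cancel_left]

theorem sum_window_le_sum_range {M : Type*} [AddCommMonoid M] [PartialOrder M]
    [IsOrderedAddMonoid M] {f : ℕ → M} {L ν h : ℕ} (hL : ν + h ≤ L) (hf : ∀ i, 0 ≤ f i) :
    ∑ k ∈ range h, f (ν + k) ≤ ∑ i ∈ range L, f i := by
  rw [← Nat.add_sub_cancel_left (n := ν) (m := h), ← sum_Ico_eq_sum_range]
  exact sum_le_sum_of_subset_of_nonneg (fun i hi => by simp at hi ⊢; omega) fun i _ _ => hf i

section GainBound

variable {n m p N L ν : ℕ} {A : Matrix (Fin n) (Fin n) ℝ} {B : Matrix (Fin n) (Fin m) ℝ}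
  {C : Matrix (Fin p) (Fin n) ℝ} {D : Matrix (Fin p) (Fin m) ℝ}
  {x : ℕ → Fin n → ℝ} {u : ℕ → Fin m → ℝ} {y : ℕ → Fin p → ℝ}

theorem sum_output_le_of_data_inequality (htraj : IsStateTrajectory A B C D N x u y)
    (hctrb : (ctrbMat A B).rank = n) (hpe : PersistentlyExciting m (L + n) N u)
    (hLN : L + n ≤ N) {γsq : ℝ}
    (ha : ∀ α : Fin (N - L + 1) → ℝ, ZeroDataPrefix N L ν α u y →
      ∑ i ∈ range L, combSignal N L α y i ⬝ᵥ combSignal N L α y i ≤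
        γsq * ∑ i ∈ range L, combSignal N L α u i ⬝ᵥ combSignal N L α u i)
    {ub : ℕ → Fin m → ℝ} {yb : ℕ → Fin p → ℝ} (hb : IsZeroInitTrajectory A B C D (L - ν) ub yb)
    {h : ℕ} (hh : h < L - ν) :
    ∑ k ∈ range (h + 1), yb k ⬝ᵥ yb k ≤ γsq * ∑ k ∈ range (h + 1), ub k ⬝ᵥ ub k := by
  obtain ⟨xb, hxb0, hxb : IsStateTrajectory A B C D (L - ν) xb ub yb⟩ := hb
  let w : ℕ → Fin m → ℝ := fun i => if ν ≤ i ∧ i < ν + (h + 1) then ub (i - ν) else 0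
  have hw_out : ∀ i, i < ν ∨ ν + (h + 1) ≤ i → w i = 0 := fun i hi => if_neg (by omega)
  have hw_in : ∀ k < h + 1, w (ν + k) = ub k := fun k hk => by simp [w, hk]
  obtain ⟨α, hα0, hαu⟩ := exists_combSignal_eq (fun t ht => (htraj t ht).1) hctrb hpe hLN 0 w
  have hT := isStateTrajectory_combSignal α htraj (by omega)
  obtain ⟨hXpre, hYpre⟩ := (hT.mono (by omega : ν ≤ L)).eq_zero_of_input_eq_zero hα0
    fun k hk => by rw [hαu k (by omega), hw_out k (.inl hk)]
  obtain ⟨-, hYwin⟩ := ((hT.shift ν).mono (by omega : h + 1 ≤ L - ν)).eq_of_input_eq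
    (hxb.mono hh) (by rw [add_zero, hXpre ν le_rfl, hxb0])
    fun k hk => by rw [hαu _ (by omega), hw_in k hk]
  have hzdp : ZeroDataPrefix N L ν α u y := fun i hi =>
    ⟨by rw [hαu i (by omega), hw_out i (.inl hi)], hYpre i hi⟩
  calc ∑ k ∈ range (h + 1), yb k ⬝ᵥ yb k
      = ∑ k ∈ range (h + 1), combSignal N L α y (ν + k) ⬝ᵥ combSignal N L α y (ν + k) :=
        sum_congr rfl fun k hk => by rw [hYwin k (by simpa using hk)]
    _ ≤ ∑ i ∈ range L, combSignal N L α y i ⬝ᵥ combSignal N L α y i :=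
        sum_window_le_sum_range (by omega) fun i => dotProduct_self_star_nonneg _
    _ ≤ γsq * ∑ i ∈ range L, combSignal N L α u i ⬝ᵥ combSignal N L α u i := ha α hzdp
    _ = γsq * ∑ k ∈ range (h + 1), ub k ⬝ᵥ ub k := by
        rw [sum_range_eq_sum_window_of_eq_zero (ν := ν) (h := h + 1) (by omega) fun i hi hi' => by
          rw [hαu i hi, hw_out i hi', zero_dotProduct]]
        exact congrArg _ (sum_congr rfl fun k hk => by
          rw [hαu _ (by simp at hk; omega), hw_in k (by simpa using hk)])

theorem data_inequality_of_sum_output_le (htraj : IsStateTrajectory A B C D N x u y)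
    (hobs : (obsMat A C).rank = n) (hnν : n ≤ ν) (hν : ν < L) (hLN : L ≤ N) {γsq : ℝ}
    (hb : ∀ ub : ℕ → Fin m → ℝ, ∀ yb : ℕ → Fin p → ℝ,
      IsZeroInitTrajectory A B C D (L - ν) ub yb →
      ∀ h < L - ν,
        ∑ k ∈ range (h + 1), yb k ⬝ᵥ yb k ≤ γsq * ∑ k ∈ range (h + 1), ub k ⬝ᵥ ub k)
    {α : Fin (N - L + 1) → ℝ} (hα : ZeroDataPrefix N L ν α u y) :
    ∑ i ∈ range L, combSignal N L α y i ⬝ᵥ combSignal N L α y i ≤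
      γsq * ∑ i ∈ range L, combSignal N L α u i ⬝ᵥ combSignal N L α u i := by
  have hT := isStateTrajectory_combSignal α htraj hLN
  have hX0 := (hT.mono (by omega : n ≤ L)).initial_eq_zero_of_observable hobs
    (fun k hk => (hα k (by omega)).1) fun k hk => (hα k (by omega)).2
  obtain ⟨hXpre, -⟩ := (hT.mono hν.le).eq_zero_of_input_eq_zero hX0 fun k hk => (hα k hk).1
  have key := hb _ _ ((hT.shift ν).isZeroInitTrajectory (by simpa using hXpre ν le_rfl))
    (L - ν - 1) (by omega)
  rw [Nat.sub_add_cancel (by omega)] at key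
  have hsplit : ∀ {q : ℕ} (v : ℕ → Fin q → ℝ), (∀ i < ν, v i = 0) →
      ∑ i ∈ range L, v i ⬝ᵥ v i = ∑ k ∈ range (L - ν), v (ν + k) ⬝ᵥ v (ν + k) :=
    fun v hv => sum_range_eq_sum_window_of_eq_zero (by omega) fun i _ hi => by
      rw [hv i (by omega), zero_dotProduct]
  rwa [hsplit _ fun i hi => (hα i hi).2, hsplit _ fun i hi => (hα i hi).1]

end GainBound

/-- data-based verification of a finite-horizon ℓ₂-gain bound: the
data-based inequality (a) is equivalent to the ℓ₂-gain bound `γ` over the horizon `L-ν`. -/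
theorem statement8 {n m p N L ν : ℕ} (A : Matrix (Fin n) (Fin n) ℝ)
    (B : Matrix (Fin n) (Fin m) ℝ) (C : Matrix (Fin p) (Fin n) ℝ) (D : Matrix (Fin p) (Fin m) ℝ)
    (u : ℕ → Fin m → ℝ) (y : ℕ → Fin p → ℝ)
    (htraj : IsTrajectory A B C D N u y)
    (hmin : IsMinimal A B C)
    (hpe : PersistentlyExciting m (L + n) N u)
    (hnν : n ≤ ν) (hν : ν < L) (hLN : L + n ≤ N)
    (γsq : ℝ) :
    (∀ α : Fin (N - L + 1) → ℝ, ZeroDataPrefix N L ν α u y →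
      ∑ i ∈ Finset.range L, combSignal N L α y i ⬝ᵥ combSignal N L α y i ≤
        γsq * ∑ i ∈ Finset.range L, combSignal N L α u i ⬝ᵥ combSignal N L α u i) ↔
    (∀ ub : ℕ → Fin m → ℝ, ∀ yb : ℕ → Fin p → ℝ,
      IsZeroInitTrajectory A B C D (L - ν) ub yb →
      ∀ h < L - ν,
        ∑ k ∈ Finset.range (h + 1), yb k ⬝ᵥ yb k ≤
          γsq * ∑ k ∈ Finset.range (h + 1), ub k ⬝ᵥ ub k) := by
  obtain ⟨x, hx⟩ := htraj
  exact ⟨fun ha _ _ hb _ hh => sum_output_le_of_data_inequality hx hmin.2 hpe hLN ha hb hh,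
    fun hb _ hα => data_inequality_of_sum_output_le hx hmin.1 hnν hν (by omega) hb hα⟩
end
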